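/- arXiv:1605.01651 — 7 statements merged into one kernel-verified Lean document; each statement's English description precedes it below -/
import Mathlib

section
/- If a group Γ is written as a finite union Γ = Y₁ ∪ ... ∪ Yᵣ of subsets, then there exists an index ℓ such that the subgroup generated by the elements γδ⁻¹, for γ, δ ∈ Yₗ, has index at most r in Γ. -/
/-!
For `d ∈ Yᵢ` and every `y ∈ Yᵢ` we have `d y⁻¹ ∈ Δᵢ`, so `Yᵢ⁻¹` lies in the left coset `d⁻¹ Δᵢ`.
Inverting the cover `Γ = ⋃ Yᵢ` therefore covers `Γ` by `r` left cosets of the `Δᵢ`, and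
B. H. Neumann's lemma gives some `Δᵢ` of index at most `r`.
-/

open scoped Pointwise

section

variable {G : Type*} [Group G]

theorem Subgroup.exists_index_le_card_of_subset_leftCoset_cover {ι : Type*} {s : Finset ι}
    {Y : ι → Set G} {H : ι → Subgroup G} (hcovers : ⋃ i ∈ s, Y i = Set.univ)
    (hY : ∀ i ∈ s, ∃ g : G, Y i ⊆ g • (H i : Set G)) :
    ∃ i ∈ s, (H i).FiniteIndex ∧ (H i).index ≤ s.card := by
  choose! g hg using hY
  refine Subgroup.exists_index_le_card_of_leftCoset_cover (g := g) (Set.eq_univ_of_univ_subset ?_)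
  rw [← hcovers]
  exact Set.biUnion_mono subset_rfl hg

def differenceSubgroup (Y : Set G) : Subgroup G :=
  Subgroup.closure {x | ∃ γ ∈ Y, ∃ δ ∈ Y, x = γ * δ⁻¹}

theorem inv_subset_smul_differenceSubgroup {Y : Set G} {d : G} (hd : d ∈ Y) :
    Y⁻¹ ⊆ d⁻¹ • (differenceSubgroup Y : Set G) := by
  intro y hy
  rw [Set.mem_smul_set_iff_inv_smul_mem, inv_inv, smul_eq_mul]
  exact Subgroup.subset_closure ⟨d, hd, y⁻¹, hy, by rw [inv_inv]⟩

theorem exists_inv_subset_smul_differenceSubgroup (Y : Set G) :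
    ∃ g : G, Y⁻¹ ⊆ g • (differenceSubgroup Y : Set G) := by
  rcases Y.eq_empty_or_nonempty with rfl | ⟨d, hd⟩
  · exact ⟨1, by simp⟩
  · exact ⟨d⁻¹, inv_subset_smul_differenceSubgroup hd⟩

end

/-- If a group `Γ` is a finite union of subsets `Y₁ ∪ ... ∪ Yᵣ`, then for some index `ℓ`
the subgroup generated by the elements `γδ⁻¹`, `γ, δ ∈ Y_ℓ`, has index at most `r`. -/
theorem exists_difference_subgroup_small_index {Γ : Type*} [Group Γ] (r : ℕ)
    (Y : Fin r → Set Γ) (hcover : (⋃ i, Y i) = Set.univ) :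
    ∃ ℓ : Fin r,
      (Subgroup.closure {x : Γ | ∃ γ ∈ Y ℓ, ∃ δ ∈ Y ℓ, x = γ * δ⁻¹}).index ≠ 0 ∧
      (Subgroup.closure {x : Γ | ∃ γ ∈ Y ℓ, ∃ δ ∈ Y ℓ, x = γ * δ⁻¹}).index ≤ r := by
  have hinv_cover : ⋃ i ∈ Finset.univ, (Y i)⁻¹ = Set.univ := by
    simp [← Set.iUnion_inv, hcover]
  obtain ⟨ℓ, -, hfinite, hle⟩ := Subgroup.exists_index_le_card_of_subset_leftCoset_cover
    (H := fun i ↦ differenceSubgroup (Y i)) hinv_cover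
    (fun i _ ↦ exists_inv_subset_smul_differenceSubgroup (Y i))
  exact ⟨ℓ, hfinite.index_ne_zero, hle.trans_eq (Finset.card_fin r)⟩
end

section
/- Let X be a Hausdorff space without isolated points and let g₁, ..., gᵣ be non-trivial homeomorphisms of X. Then there exist non-empty open subsets U₁, ..., Uᵣ of X such that the 2r sets U₁, ..., Uᵣ, g₁(U₁), ..., gᵣ(Uᵣ) are pairwise disjoint. -/
/-!
Choose points `x₁, …, xᵣ` one at a time so that the `2r` points `xᵢ, gᵢ xᵢ` are distinct; this
is possible because each `gᵢ` moves a non-empty open, hence infinite, set of points. Separate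
these `2r` points by pairwise disjoint open sets `W` and take `Uᵢ = W xᵢ ∩ gᵢ⁻¹ (W (gᵢ xᵢ))`.
-/

open Filter Topology Function

theorem Equiv.Perm.exists_moved_point_avoiding {X : Type*} (e : Equiv.Perm X)
    (he : {x | e x ≠ x}.Infinite) {F : Set X} (hF : F.Finite) :
    ∃ y, e y ≠ y ∧ y ∉ F ∧ e y ∉ F := by
  obtain ⟨y, hy, hyF⟩ := (he.sdiff (hF.union (hF.preimage e.injective.injOn))).nonempty
  exact ⟨y, hy, fun h => hyF (.inl h), fun h => hyF (.inr h)⟩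

theorem Equiv.Perm.exists_injective_sumElim_apply {X : Type*} :
    ∀ {r : ℕ} (g : Fin r → Equiv.Perm X), (∀ i, {x | g i x ≠ x}.Infinite) →
      ∃ x : Fin r → X, Injective (Sum.elim x fun i => g i (x i))
  | 0, _, _ => ⟨Fin.elim0, fun a => by rcases a with i | i <;> exact i.elim0⟩
  | r + 1, g, hg => by
    obtain ⟨x, hx⟩ := exists_injective_sumElim_apply (fun i => g i.succ) fun i => hg i.succ
    obtain ⟨y, hy, hyF, hgyF⟩ := (g 0).exists_moved_point_avoiding (hg 0)
      (Set.finite_range (Sum.elim x fun i => g i.succ (x i)))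
    refine ⟨Fin.cons y x, ?_⟩
    have hcons : (fun i => g i ((Fin.cons y x : Fin (r + 1) → X) i)) =
        Fin.cons (g 0 y) fun i => g i.succ (x i) := by
      funext i
      cases i using Fin.cases <;> rfl
    rw [Sum.elim_injective] at hx ⊢
    simp only [Set.mem_range, Sum.exists, Sum.elim_inl, Sum.elim_inr, not_or,
      not_exists] at hyF hgyF
    rw [hcons, Fin.cons_injective_iff, Fin.cons_injective_iff]
    simp only [Fin.forall_fin_succ, Fin.cons_zero, Fin.cons_succ, Set.mem_range, not_exists]
    exact ⟨⟨hyF.1, hx.1⟩, ⟨hgyF.2, hx.2.1⟩, ⟨hy.symm, fun j h => hyF.2 j h.symm⟩,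
      fun i => ⟨hgyF.1 i, hx.2.2 i⟩⟩

theorem Continuous.infinite_setOf_apply_ne {X : Type*} [TopologicalSpace X] [T2Space X]
    (hX : ∀ x : X, NeBot (𝓝[≠] x)) {f : X → X} (hf : Continuous f) (hmoved : ∃ x, f x ≠ x) :
    {x | f x ≠ x}.Infinite := by
  obtain ⟨x, hx⟩ := hmoved
  have := hX x
  exact infinite_of_mem_nhds x ((isOpen_ne_fun hf continuous_id).mem_nhds hx)

/-- Given non-trivial homeomorphisms `g₁, ..., gᵣ` of a Hausdorff space without isolated
points, there are non-empty open sets `U₁, ..., Uᵣ` such that the `2r` sets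
`U₁, ..., Uᵣ, g₁(U₁), ..., gᵣ(Uᵣ)` are pairwise disjoint. -/
theorem exists_disjoint_open_sets_for_homeomorphisms {X : Type*} [TopologicalSpace X]
    [T2Space X] (hX : ∀ x : X, Filter.NeBot (nhdsWithin x {x}ᶜ))
    (r : ℕ) (g : Fin r → X ≃ₜ X) (hg : ∀ i, ∃ x : X, g i x ≠ x) :
    ∃ U : Fin r → Set X, (∀ i, IsOpen (U i)) ∧ (∀ i, (U i).Nonempty) ∧
      Pairwise fun j k : Fin r ⊕ Fin r =>
        Disjoint (Sum.elim U (fun i => (g i) '' (U i)) j)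
          (Sum.elim U (fun i => (g i) '' (U i)) k) := by
  obtain ⟨x, hx⟩ := Equiv.Perm.exists_injective_sumElim_apply (fun i => (g i).toEquiv)
    fun i => (g i).continuous.infinite_setOf_apply_ne hX (hg i)
  set p : Fin r ⊕ Fin r → X := Sum.elim x fun i => g i (x i)
  obtain ⟨W, hW, hWd⟩ := (Set.finite_range p).t2_separation
  set U : Fin r → Set X := fun i => W (x i) ∩ g i ⁻¹' W (g i (x i))
  have hUW : ∀ j, Sum.elim U (fun i => g i '' U i) j ⊆ W (p j) := by
    rintro (i | i)
    · exact Set.inter_subset_left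
    · exact (Set.image_mono Set.inter_subset_right).trans (Set.image_preimage_subset _ _)
  refine ⟨U, fun i => (hW _).2.inter ((hW _).2.preimage (g i).continuous),
    fun i => ⟨x i, (hW _).1, (hW _).1⟩, fun j k hjk => ?_⟩
  exact (hWd (Set.mem_range_self j) (Set.mem_range_self k) (hx.ne hjk)).mono (hUW j) (hUW k)
end

section
/- Let G be a countable group acting by homeomorphisms on a Hausdorff space X. The stabilizer map Stab : X → Sub(G), x ↦ G_x, is continuous at a point x ∈ X (with respect to the Chabauty topology on Sub(G)) if and only if for every g ∈ G fixing x, the fixed-point set Fix(g) contains a neighbourhood of x. -/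
/-- The Chabauty topology on the space of subgroups of `G`: the topology induced by the
inclusion of `Sub(G)` into the product space `{0,1}^G`. -/
noncomputable instance chabautyTopology {G : Type*} [Group G] :
    TopologicalSpace (Subgroup G) :=
  TopologicalSpace.induced
    (fun H : Subgroup G => fun g : G => @decide (g ∈ H) (Classical.propDecidable _))
    inferInstance

open Filter Topology

theorem Subgroup.continuousAt_iff_eventually_mem_iff {G X : Type*} [Group G]
    [TopologicalSpace X] {f : X → Subgroup G} {x : X} :
    ContinuousAt f x ↔ ∀ g : G, ∀ᶠ y in 𝓝 x, (g ∈ f y ↔ g ∈ f x) := by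
  have hind : IsInducing (fun H : Subgroup G =>
      fun g : G => @decide (g ∈ H) (Classical.propDecidable _)) := ⟨rfl⟩
  rw [hind.continuousAt_iff, continuousAt_pi]
  refine forall_congr' fun g => ?_
  rw [ContinuousAt, nhds_discrete Bool, tendsto_pure]
  simp only [Function.comp, decide_eq_decide]

theorem eventually_smul_ne_of_smul_ne {G X : Type*} [SMul G X] [TopologicalSpace X]
    [T2Space X] {g : G} (hg : Continuous fun x : X => g • x) {x : X} (hx : g • x ≠ x) :
    ∀ᶠ y in 𝓝 x, g • y ≠ y :=
  (isClosed_eq hg continuous_id).isOpen_compl.mem_nhds hx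

theorem continuousAt_stabilizer_iff_general {G X : Type*} [Group G]
    [TopologicalSpace X] [T2Space X] [MulAction G X]
    (hcont : ∀ g : G, Continuous fun x : X => g • x) (x : X) :
    ContinuousAt (fun y : X => MulAction.stabilizer G y) x ↔
      ∀ g : G, g • x = x → ∃ U ∈ nhds x, ∀ y ∈ U, g • y = y := by
  simp only [Subgroup.continuousAt_iff_eventually_mem_iff, MulAction.mem_stabilizer_iff]
  refine forall_congr' fun g => ⟨fun h hg => ?_, fun h => ?_⟩
  · exact ⟨_, h.mono fun y hy => hy.mpr hg, fun y hy => hy⟩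
  · by_cases hg : g • x = x
    · obtain ⟨U, hU, hfix⟩ := h hg
      exact mem_of_superset hU fun y hy => iff_of_true (hfix y hy) hg
    · exact (eventually_smul_ne_of_smul_ne (hcont g) hg).mono fun y hy => iff_of_false hy hg

/-- The stabilizer map `x ↦ G_x` is continuous at `x` (for the Chabauty topology) if and
only if for every `g` fixing `x`, the fixed-point set of `g` contains a neighbourhood
of `x` (i.e. `G_x = G_x⁰`). -/
theorem continuousAt_stabilizer_iff {G X : Type*} [Group G] [Countable G]
    [TopologicalSpace X] [T2Space X] [MulAction G X]
    (hcont : ∀ g : G, Continuous fun x : X => g • x) (x : X) :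
    ContinuousAt (fun y : X => MulAction.stabilizer G y) x ↔
      ∀ g : G, g • x = x → ∃ U ∈ nhds x, ∀ y ∈ U, g • y = y :=
  continuousAt_stabilizer_iff_general hcont x
end

section
/- Let X be a Hausdorff space, G a group of homeomorphisms of X, and N a non-trivial normal subgroup of G. Then there exists a non-empty open subset U ⊂ X such that the commutator subgroup [G_U, G_U] of the rigid stabilizer G_U is contained in N. -/
/-!
Pick `g ∈ N` moving some point `x`. Separating `x` from `g • x` gives a non-empty open `U`
disjoint from `g • U`. For `a, b ∈ G_U`, the conjugate `d = g a⁻¹ g⁻¹` lies in `G_{g • U}`,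
so it commutes with `b`; hence `⁅a, b⁆ = ⁅a d, b⁆ = ⁅⁅a, g⁆, b⁆`, which lies in `N`
because `⁅a, g⁆ ∈ N`.
-/

/-- The rigid stabilizer of a subset `U`: the subgroup of elements fixing the complement
of `U` pointwise. -/
def rigidStabilizer (G : Type*) {X : Type*} [Group G] [MulAction G X] (U : Set X) :
    Subgroup G where
  carrier := {g : G | ∀ x : X, x ∉ U → g • x = x}
  one_mem' := fun x _ => one_smul G x
  mul_mem' := by
    intro a b ha hb x hx
    rw [mul_smul, hb x hx, ha x hx]
  inv_mem' := by
    intro a ha x hx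
    nth_rewrite 1 [← ha x hx]
    rw [inv_smul_smul]

open scoped Pointwise commutatorElement

section RigidStabilizer

variable {G X : Type*} [Group G] [MulAction G X] {U V : Set X} {a b : G}

lemma smul_mem_of_mem_rigidStabilizer (ha : a ∈ rigidStabilizer G U) {x : X} (hx : x ∈ U) :
    a • x ∈ U := by
  by_contra h
  have hfix : a⁻¹ • a • x = a • x := (rigidStabilizer G U).inv_mem ha _ h
  rw [inv_smul_smul] at hfix
  exact h (hfix ▸ hx)

lemma conj_mem_rigidStabilizer_smul (ha : a ∈ rigidStabilizer G U) (g : G) :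
    g * a * g⁻¹ ∈ rigidStabilizer G (g • U) := by
  intro x hx
  rw [Set.mem_smul_set_iff_inv_smul_mem] at hx
  rw [mul_smul, mul_smul, ha _ hx, smul_inv_smul]

lemma mul_smul_eq_mul_smul_of_notMem (hUV : Disjoint U V) (ha : a ∈ rigidStabilizer G U)
    (hb : b ∈ rigidStabilizer G V) {x : X} (hx : x ∉ U) : (a * b) • x = (b * a) • x := by
  rw [mul_smul, mul_smul, ha x hx]
  by_cases hxV : x ∈ V
  · exact ha _ (hUV.notMem_of_mem_right (smul_mem_of_mem_rigidStabilizer hb hxV))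
  · rw [hb x hxV, ha x hx]

lemma commute_of_mem_rigidStabilizer_of_disjoint [FaithfulSMul G X] (hUV : Disjoint U V)
    (ha : a ∈ rigidStabilizer G U) (hb : b ∈ rigidStabilizer G V) : Commute a b := by
  refine FaithfulSMul.eq_of_smul_eq_smul (α := X) fun x => ?_
  by_cases hx : x ∈ U
  · exact (mul_smul_eq_mul_smul_of_notMem hUV.symm hb ha (hUV.notMem_of_mem_left hx)).symm
  · exact mul_smul_eq_mul_smul_of_notMem hUV ha hb hx

end RigidStabilizer

lemma commutatorElement_mul_left_of_commute {G : Type*} [Group G] {a b d : G}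
    (h : Commute d b) : ⁅a * d, b⁆ = ⁅a, b⁆ := by
  rw [commutatorElement_mul_left_eq_conj_mul, commutatorElement_eq_one_iff_commute.2 h,
    mul_one, mul_inv_cancel, one_mul]

lemma exists_isOpen_nonempty_disjoint_smul {G X : Type*} [SMul G X] [TopologicalSpace X]
    [T2Space X] {g : G} (hg : Continuous fun x : X => g • x) {x : X} (hx : g • x ≠ x) :
    ∃ U : Set X, IsOpen U ∧ U.Nonempty ∧ Disjoint U (g • U) := by
  obtain ⟨V, W, hV, hW, hgxV, hxW, hVW⟩ := t2_separation hx
  refine ⟨W ∩ (fun y => g • y) ⁻¹' V, hW.inter (hV.preimage hg), ⟨x, hxW, hgxV⟩, ?_⟩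
  refine hVW.symm.mono Set.inter_subset_left ?_
  rintro _ ⟨y, hy, rfl⟩
  exact hy.2

/-- If `G` is a group of homeomorphisms of a Hausdorff space `X` and `N` is a non-trivial
normal subgroup of `G`, then there is a non-empty open `U ⊆ X` with `[G_U, G_U] ≤ N`. -/
theorem exists_open_commutator_rigidStabilizer_le {G X : Type*} [Group G]
    [TopologicalSpace X] [T2Space X] [MulAction G X]
    (hcont : ∀ g : G, Continuous fun x : X => g • x)
    (hfaithful : ∀ g : G, (∀ x : X, g • x = x) → g = 1)
    (N : Subgroup G) (hN : N.Normal) (hNbot : N ≠ ⊥) :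
    ∃ U : Set X, IsOpen U ∧ U.Nonempty ∧
      ⁅rigidStabilizer G U, rigidStabilizer G U⁆ ≤ N := by
  have : FaithfulSMul G X := faithfulSMul_iff.2 hfaithful
  obtain ⟨g, hgN, hg1⟩ := N.bot_or_exists_ne_one.resolve_left hNbot
  obtain ⟨x, hx⟩ : ∃ x : X, g • x ≠ x := by
    by_contra! h
    exact hg1 (hfaithful g h)
  obtain ⟨U, hU, hUne, hUgU⟩ := exists_isOpen_nonempty_disjoint_smul (hcont g) hx
  refine ⟨U, hU, hUne, Subgroup.commutator_le.2 fun a ha b hb => ?_⟩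
  have hcomm : Commute (g * a⁻¹ * g⁻¹) b :=
    commute_of_mem_rigidStabilizer_of_disjoint hUgU.symm
      (conj_mem_rigidStabilizer_smul (inv_mem ha) g) hb
  have hagN : ⁅a, g⁆ ∈ N :=
    Subgroup.commutator_le_right ⊤ N
      (Subgroup.commutator_mem_commutator (Subgroup.mem_top a) hgN)
  rw [← commutatorElement_mul_left_of_commute hcomm, ← mul_assoc, ← mul_assoc,
    ← commutatorElement_def]
  exact Subgroup.commutator_le_left N ⊤
    (Subgroup.commutator_mem_commutator hagN (Subgroup.mem_top b))
end

section
/- Let G be a countable group, and let H, K be uniformly recurrent subgroups of G with H ≼ K (i.e., some element of H is contained in some element of K). Then every element of H is contained in some element of K, and every element of K contains some element of H. -/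
/-- A uniformly recurrent subgroup: a closed, minimal, conjugation-invariant nonempty
subset of the Chabauty space `Sub(G)`. -/
def IsURS {G : Type*} [Group G] (𝓗 : Set (Subgroup G)) : Prop :=
  IsClosed 𝓗 ∧ 𝓗.Nonempty ∧
    (∀ (g : G), ∀ H ∈ 𝓗, Subgroup.map (MulAut.conj g).toMonoidHom H ∈ 𝓗) ∧
    ∀ 𝓚 : Set (Subgroup G), 𝓚 ⊆ 𝓗 → IsClosed 𝓚 → 𝓚.Nonempty →
      (∀ (g : G), ∀ H ∈ 𝓚, Subgroup.map (MulAut.conj g).toMonoidHom H ∈ 𝓚) → 𝓚 = 𝓗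

/-!
The pairs `(H, K) ∈ 𝓗 × 𝓚` with `H ≤ K` form a nonempty, closed, conjugation-invariant set.
The Chabauty space is compact (it is a closed subset of `G → Bool`), so both projections of
this set are closed; they are also nonempty and conjugation-invariant, hence by minimality
they are all of `𝓗` and all of `𝓚`.
-/

namespace Subgroup

variable {G : Type*} [Group G]

/-- The map along which `chabautyTopology` is induced. -/
noncomputable def boolIndicator (H : Subgroup G) : G → Bool :=
  fun g => @decide (g ∈ H) (Classical.propDecidable _)

@[simp]
lemma boolIndicator_eq_true {H : Subgroup G} {g : G} : H.boolIndicator g = true ↔ g ∈ H := by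
  simp [boolIndicator]

lemma isInducing_boolIndicator : Topology.IsInducing (boolIndicator (G := G)) := ⟨rfl⟩

lemma continuous_boolIndicator_apply (g : G) :
    Continuous fun H : Subgroup G => H.boolIndicator g :=
  (continuous_apply g).comp isInducing_boolIndicator.continuous

lemma isClosed_range_boolIndicator : IsClosed (Set.range (boolIndicator (G := G))) := by
  have hrange : Set.range (boolIndicator (G := G)) = {f | f 1 = true} ∩
      ⋂ (a : G) (b : G), {f | f a = true → f b = true → f (a * b⁻¹) = true} := by
    ext f
    simp only [Set.mem_range, Set.mem_inter_iff, Set.mem_iInter, Set.mem_ofPred_eq]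
    constructor
    · rintro ⟨H, rfl⟩
      simp only [boolIndicator_eq_true]
      exact ⟨H.one_mem, fun a b ha hb => H.mul_mem ha (H.inv_mem hb)⟩
    · rintro ⟨h1, hdiv⟩
      exact ⟨ofDiv {g | f g = true} ⟨1, h1⟩ fun a ha b hb => hdiv a b ha hb,
        funext fun g => Bool.eq_iff_iff.2 boolIndicator_eq_true⟩
  rw [hrange]
  refine IsClosed.inter ?_ (isClosed_iInter fun a => isClosed_iInter fun b => ?_)
  · exact isClosed_eq (continuous_apply 1) continuous_const
  · exact (isClosed_discrete
      {x : Bool × Bool × Bool | x.1 = true → x.2.1 = true → x.2.2 = true}).preimage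
      (by fun_prop : Continuous fun f : G → Bool => (f a, f b, f (a * b⁻¹)))

instance : CompactSpace (Subgroup G) :=
  ⟨isInducing_boolIndicator.isCompact_iff.2 <| by
    simpa using isClosed_range_boolIndicator.isCompact⟩

lemma isClopen_setOf_mem (g : G) : IsClopen {H : Subgroup G | g ∈ H} := by
  simpa only [Set.preimage, Set.mem_singleton_iff, boolIndicator_eq_true] using
    (isClopen_discrete {true}).preimage (continuous_boolIndicator_apply g)

lemma isClosed_setOf_le : IsClosed {p : Subgroup G × Subgroup G | p.1 ≤ p.2} := by
  have : {p : Subgroup G × Subgroup G | p.1 ≤ p.2} =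
      ⋂ g : G, {p | g ∈ p.1}ᶜ ∪ {p | g ∈ p.2} := by
    ext p
    simp [SetLike.le_def, imp_iff_not_or]
  rw [this]
  exact isClosed_iInter fun g =>
    ((isClopen_setOf_mem g).isOpen.preimage continuous_fst).isClosed_compl.union
      ((isClopen_setOf_mem g).isClosed.preimage continuous_snd)

end Subgroup

section URS

variable {G : Type*} [Group G]

def IsConjInvariant (𝓢 : Set (Subgroup G)) : Prop :=
  ∀ (g : G), ∀ H ∈ 𝓢, Subgroup.map (MulAut.conj g).toMonoidHom H ∈ 𝓢

lemma IsURS.isClosed {𝓗 : Set (Subgroup G)} (h𝓗 : IsURS 𝓗) : IsClosed 𝓗 := h𝓗.1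

lemma IsURS.isConjInvariant {𝓗 : Set (Subgroup G)} (h𝓗 : IsURS 𝓗) : IsConjInvariant 𝓗 :=
  h𝓗.2.2.1

lemma IsURS.eq_of_subset {𝓗 𝓢 : Set (Subgroup G)} (h𝓗 : IsURS 𝓗) (h𝓢𝓗 : 𝓢 ⊆ 𝓗)
    (h𝓢 : IsClosed 𝓢) (h𝓢_ne : 𝓢.Nonempty) (h𝓢_conj : IsConjInvariant 𝓢) : 𝓢 = 𝓗 :=
  h𝓗.2.2.2 𝓢 h𝓢𝓗 h𝓢 h𝓢_ne h𝓢_conj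

theorem IsURS.forall_exists_of_exists {R : Subgroup G → Subgroup G → Prop}
    (hR : IsClosed {p : Subgroup G × Subgroup G | R p.1 p.2})
    (hR_conj : ∀ (g : G) (H K : Subgroup G), R H K →
      R (H.map (MulAut.conj g).toMonoidHom) (K.map (MulAut.conj g).toMonoidHom))
    {𝓗 𝓚 : Set (Subgroup G)} (h𝓗 : IsURS 𝓗) (h𝓚 : IsClosed 𝓚) (h𝓚_conj : IsConjInvariant 𝓚)
    (hR𝓗𝓚 : ∃ H ∈ 𝓗, ∃ K ∈ 𝓚, R H K) :
    ∀ H ∈ 𝓗, ∃ K ∈ 𝓚, R H K := by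
  set 𝓢 := {H ∈ 𝓗 | ∃ K ∈ 𝓚, R H K}
  have h𝓢 : 𝓢 = Prod.fst '' (𝓗 ×ˢ 𝓚 ∩ {p | R p.1 p.2}) := by
    ext H
    simp [𝓢, and_assoc]
  have h𝓢_closed : IsClosed 𝓢 :=
    h𝓢 ▸ isClosedMap_fst_of_compactSpace _ ((h𝓗.isClosed.prod h𝓚).inter hR)
  have h𝓢_conj : IsConjInvariant 𝓢 := fun g H ⟨hH, K, hK, hHK⟩ =>
    ⟨h𝓗.isConjInvariant g H hH, _, h𝓚_conj g K hK, hR_conj g H K hHK⟩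
  have h𝓢_eq : 𝓢 = 𝓗 := h𝓗.eq_of_subset (fun _ hH => hH.1) h𝓢_closed hR𝓗𝓚 h𝓢_conj
  exact fun H hH => (h𝓢_eq.ge hH).2

end URS

theorem urs_prec_strong_general {G : Type*} [Group G]
    (𝓗 𝓚 : Set (Subgroup G)) (h𝓗 : IsURS 𝓗) (h𝓚 : IsURS 𝓚)
    (hprec : ∃ H ∈ 𝓗, ∃ K ∈ 𝓚, H ≤ K) :
    (∀ H ∈ 𝓗, ∃ K ∈ 𝓚, H ≤ K) ∧ (∀ K ∈ 𝓚, ∃ H ∈ 𝓗, H ≤ K) := by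
  have hconj : ∀ (g : G) (H K : Subgroup G), H ≤ K →
      H.map (MulAut.conj g).toMonoidHom ≤ K.map (MulAut.conj g).toMonoidHom :=
    fun _ _ _ => Subgroup.map_mono
  refine ⟨h𝓗.forall_exists_of_exists Subgroup.isClosed_setOf_le hconj h𝓚.isClosed
    h𝓚.isConjInvariant hprec, ?_⟩
  obtain ⟨H, hH, K, hK, hHK⟩ := hprec
  exact h𝓚.forall_exists_of_exists (R := fun K H => H ≤ K)
    (Subgroup.isClosed_setOf_le.preimage continuous_swap) (fun g K H => hconj g H K)
    h𝓗.isClosed h𝓗.isConjInvariant ⟨K, hK, H, hH, hHK⟩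

/-- If `𝓗 ≼ 𝓚` for URS's `𝓗, 𝓚` (some element of `𝓗` is contained in some element of
`𝓚`), then every element of `𝓗` is contained in some element of `𝓚` and every element of
`𝓚` contains some element of `𝓗`. -/
theorem urs_prec_strong {G : Type*} [Group G] [Countable G]
    (𝓗 𝓚 : Set (Subgroup G)) (h𝓗 : IsURS 𝓗) (h𝓚 : IsURS 𝓚)
    (hprec : ∃ H ∈ 𝓗, ∃ K ∈ 𝓚, H ≤ K) :
    (∀ H ∈ 𝓗, ∃ K ∈ 𝓚, H ≤ K) ∧ (∀ K ∈ 𝓚, ∃ H ∈ 𝓗, H ≤ K) :=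
  urs_prec_strong_general 𝓗 𝓚 h𝓗 h𝓚 hprec
end

section
/- Let G be a countable group acting minimally on a compact Hausdorff space X. The stabilizer URS S_G(X) equals the trivial URS {1} if and only if the action of G on X is topologically free. -/
open Filter Topology MulAction

theorem continuousAt_subgroup_iff {G X : Type*} [Group G] [TopologicalSpace X]
    {f : X → Subgroup G} {y : X} :
    ContinuousAt f y ↔ ∀ g : G, ∀ᶠ z in 𝓝 y, (g ∈ f z ↔ g ∈ f y) := by
  simp only [ContinuousAt, nhds_induced, tendsto_comap_iff, tendsto_pi_nhds,
    Function.comp_def, nhds_discrete, tendsto_pure, decide_eq_decide]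

theorem injective_decide_mem_subgroup (G : Type*) [Group G] :
    Function.Injective
      (fun H : Subgroup G => fun g : G => @decide (g ∈ H) (Classical.propDecidable _)) :=
  fun H K h => Subgroup.ext fun g => by simpa only [decide_eq_decide] using congrFun h g

instance chabauty_t2Space {G : Type*} [Group G] : T2Space (Subgroup G) :=
  T2Space.of_injective_continuous (injective_decide_mem_subgroup G) continuous_induced_dom

theorem eventually_mem_iff_of_notMem_frontier {X : Type*} [TopologicalSpace X] {s : Set X}
    {y : X} (hy : y ∉ frontier s) : ∀ᶠ z in 𝓝 y, (z ∈ s ↔ y ∈ s) := by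
  rw [← Set.mem_compl_iff, compl_frontier_eq_union_interior] at hy
  rcases hy with hy | hy
  · filter_upwards [mem_interior_iff_mem_nhds.mp hy] with z hz
    exact iff_of_true hz (interior_subset hy)
  · filter_upwards [mem_interior_iff_mem_nhds.mp hy] with z hz
    exact iff_of_false hz (interior_subset hy)

section Stabilizers

variable {G X : Type*} [Group G] [TopologicalSpace X] [MulAction G X]

theorem continuousAt_stabilizer_of_forall_notMem_frontier {y : X}
    (hy : ∀ g : G, y ∉ frontier {x : X | g • x = x}) :
    ContinuousAt (fun z : X => stabilizer G z) y :=
  continuousAt_subgroup_iff.mpr fun g => eventually_mem_iff_of_notMem_frontier (hy g)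

theorem mem_interior_fixedBy_of_continuousAt_stabilizer {y : X} {g : G}
    (hy : ContinuousAt (fun z : X => stabilizer G z) y) (hg : g ∈ stabilizer G y) :
    y ∈ interior {x : X | g • x = x} := by
  refine mem_interior_iff_mem_nhds.mpr ?_
  filter_upwards [continuousAt_subgroup_iff.mp hy g] with z hz
  exact hz.mpr hg

theorem stabilizer_eq_bot_of_continuousAt
    (hfree : ∀ g : G, g ≠ 1 → interior {x : X | g • x = x} = ∅) {y : X}
    (hy : ContinuousAt (fun z : X => stabilizer G z) y) : stabilizer G y = ⊥ := by
  refine (Subgroup.eq_bot_iff_forall _).mpr fun g hg => ?_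
  by_contra hg1
  simpa [hfree g hg1] using mem_interior_fixedBy_of_continuousAt_stabilizer hy hg

theorem dense_continuousAt_stabilizer [Countable G] [BaireSpace X] [T2Space X]
    [ContinuousConstSMul G X] :
    Dense {y : X | ContinuousAt (fun z : X => stabilizer G z) y} := by
  have hgood : Dense (⋂ g : G, (frontier {x : X | g • x = x})ᶜ) := by
    refine dense_iInter_of_isOpen (fun g => isClosed_frontier.isOpen_compl) fun g => ?_
    exact interior_eq_empty_iff_dense_compl.mp
      (interior_frontier (isClosed_eq (continuous_const_smul g) continuous_id))
  exact hgood.mono fun y hy =>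
    continuousAt_stabilizer_of_forall_notMem_frontier (Set.mem_iInter.mp hy)

end Stabilizers

theorem stabilizer_urs_trivial_iff_topologically_free_general {G X : Type*} [Group G] [Countable G]
    [TopologicalSpace X] [CompactSpace X] [T2Space X] [Nonempty X] [MulAction G X]
    (hcont : ∀ g : G, Continuous fun x : X => g • x) :
    closure ((fun y : X => MulAction.stabilizer G y) ''
        {y : X | ContinuousAt (fun z : X => MulAction.stabilizer G z) y}) =
      {(⊥ : Subgroup G)} ↔
      ∀ g : G, g ≠ 1 → interior {x : X | g • x = x} = ∅ := by
  have : ContinuousConstSMul G X := ⟨hcont⟩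
  have hdense := dense_continuousAt_stabilizer (G := G) (X := X)
  constructor
  · intro hurs g hg
    by_contra hne
    obtain ⟨y, hyU, hyC⟩ :=
      hdense.inter_open_nonempty _ isOpen_interior (Set.nonempty_iff_ne_empty.mpr hne)
    have hbot : stabilizer G y ∈ closure ((fun y : X => stabilizer G y) ''
        {y : X | ContinuousAt (fun z : X => stabilizer G z) y}) := subset_closure ⟨y, hyC, rfl⟩
    rw [hurs, Set.mem_singleton_iff] at hbot
    have hgy : g ∈ stabilizer G y := mem_stabilizer_iff.mpr (interior_subset hyU :)
    exact hg (by rwa [hbot, Subgroup.mem_bot] at hgy)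
  · intro hfree
    have himage : (fun y : X => stabilizer G y) ''
        {y : X | ContinuousAt (fun z : X => stabilizer G z) y} = {⊥} :=
      (hdense.nonempty.image _).subset_singleton_iff.mp <| Set.image_subset_iff.mpr
        fun y hy => stabilizer_eq_bot_of_continuousAt hfree hy
    rw [himage, closure_singleton]

/-- For a faithful minimal action of a countable group on a compact Hausdorff space,
the stabilizer URS `S_G(X)` (the closure of the stabilizers of the continuity points of
the stabilizer map) is the trivial URS `{1}` iff the action is topologically free. -/
theorem stabilizer_urs_trivial_iff_topologically_free {G X : Type*} [Group G] [Countable G]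
    [TopologicalSpace X] [CompactSpace X] [T2Space X] [Nonempty X] [MulAction G X]
    (hcont : ∀ g : G, Continuous fun x : X => g • x)
    (hfaithful : ∀ g : G, (∀ x : X, g • x = x) → g = 1)
    (hmin : ∀ x : X, Dense (MulAction.orbit G x)) :
    closure ((fun y : X => MulAction.stabilizer G y) ''
        {y : X | ContinuousAt (fun z : X => MulAction.stabilizer G z) y}) =
      {(⊥ : Subgroup G)} ↔
      ∀ g : G, g ≠ 1 → interior {x : X | g • x = x} = ∅ :=
  stabilizer_urs_trivial_iff_topologically_free_general hcont
end

section
/- Let G be a countable group with a faithful minimal action on a compact Hausdorff space X, let x, y ∈ X, and suppose the point stabilizer map is continuous at y (i.e., G_y = G_y⁰). If there is a net (gᵢ) in G with gᵢ·x → y, then every cluster point of the net (gᵢ G_x⁰ gᵢ⁻¹) in Sub(G) is contained in G_y; in particular, if gᵢ G_x⁰ gᵢ⁻¹ converges, its limit L satisfies G_y⁰ ≤ L ≤ G_y, hence L = G_y. -/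
/-- The germ stabilizer `G_x⁰`: elements acting trivially on a neighbourhood of `x`. -/
def germStabilizer (G : Type*) {X : Type*} [Group G] [TopologicalSpace X] [MulAction G X]
    (x : X) : Subgroup G where
  carrier := {g : G | ∀ᶠ y in nhds x, g • y = y}
  one_mem' := Filter.Eventually.of_forall fun y => one_smul G y
  mul_mem' := by
    intro a b ha hb
    filter_upwards [ha, hb] with y hay hby
    rw [mul_smul, hby, hay]
  inv_mem' := by
    intro a ha
    filter_upwards [ha] with y hay
    nth_rewrite 1 [← hay]
    rw [inv_smul_smul]
open Filter Topology in
private lemma chabauty_mem_nhds' {G : Type*} [Group G] (L : Subgroup G) (h : G) :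
    {H : Subgroup G | h ∈ H ↔ h ∈ L} ∈ nhds L := by
  rw [show (chabautyTopology : TopologicalSpace (Subgroup G)) = TopologicalSpace.induced
      (fun H : Subgroup G => fun g : G => @decide (g ∈ H) (Classical.propDecidable _))
      inferInstance from rfl, nhds_induced]
  refine Filter.mem_comap.2 ⟨{f : G → Bool | f h = @decide (h ∈ L) (Classical.propDecidable _)},
    ?_, ?_⟩
  · have ho : IsOpen {f : G → Bool | f h = @decide (h ∈ L) (Classical.propDecidable _)} :=
      (continuous_apply (A := fun _ : G => Bool) h).isOpen_preimage
        ({@decide (h ∈ L) (Classical.propDecidable _)} : Set Bool) (isOpen_discrete _)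
    exact ho.mem_nhds rfl
  · intro H hH
    simpa [decide_eq_decide] using hH
/-- Key convergence argument: if `gᵢ • x → y` and the stabilizer map is continuous at `y`
(`G_y = G_y⁰`), then every cluster point of the net `gᵢ G_x⁰ gᵢ⁻¹` in `Sub(G)` is
contained in `G_y`, and any limit `L` satisfies `G_y⁰ ≤ L ≤ G_y`, hence `L = G_y`. -/
theorem cluster_points_of_conjugated_germ_stabilizers {G X : Type*} [Group G] [Countable G]
    [TopologicalSpace X] [CompactSpace X] [T2Space X] [MulAction G X]
    (hcont : ∀ g : G, Continuous fun x : X => g • x)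
    (hfaithful : ∀ g : G, (∀ x : X, g • x = x) → g = 1)
    (hmin : ∀ x : X, Dense (MulAction.orbit G x))
    (x y : X) (hy : MulAction.stabilizer G y = germStabilizer G y)
    {ι : Type*} (l : Filter ι) [l.NeBot] (g : ι → G)
    (hconv : Filter.Tendsto (fun i => g i • x) l (nhds y)) :
    (∀ L : Subgroup G,
      MapClusterPt L l
        (fun i => Subgroup.map (MulAut.conj (g i)).toMonoidHom (germStabilizer G x)) →
      L ≤ MulAction.stabilizer G y) ∧
    (∀ L : Subgroup G,
      Filter.Tendsto
        (fun i => Subgroup.map (MulAut.conj (g i)).toMonoidHom (germStabilizer G x)) l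
        (nhds L) →
      germStabilizer G y ≤ L ∧ L ≤ MulAction.stabilizer G y ∧ L = MulAction.stabilizer G y) := by
  classical
  set f : ι → Subgroup G :=
    fun i => Subgroup.map (MulAut.conj (g i)).toMonoidHom (germStabilizer G x) with hf
  have hmem_fix : ∀ i (h : G), h ∈ f i → h • (g i • x) = g i • x := by
    intro i h hh
    obtain ⟨k, hk, rfl⟩ := Subgroup.mem_map.1 hh
    have hkx : k • x = x := hk.self_of_nhds
    show (MulAut.conj (g i) k) • (g i • x) = g i • x
    rw [MulAut.conj_apply, mul_smul, mul_smul, inv_smul_smul, hkx]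
  have key1 : ∀ L : Subgroup G, MapClusterPt L l f → L ≤ MulAction.stabilizer G y := by
    intro L hL h hh
    have hfreq : ∃ᶠ i in l, h ∈ f i := by
      have := mapClusterPt_iff_frequently.1 hL _ (chabauty_mem_nhds' L h)
      exact this.mono fun i hi => hi.2 hh
    have hfreq2 : ∃ᶠ i in l, h • (g i • x) = g i • x :=
      hfreq.mono fun i hi => hmem_fix i h hi
    have hne : (l ⊓ Filter.principal {i | h • (g i • x) = g i • x}).NeBot :=
      Filter.frequently_iff_neBot.1 hfreq2
    have h1 : Filter.Tendsto (fun i => g i • x)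
        (l ⊓ Filter.principal {i | h • (g i • x) = g i • x}) (nhds y) :=
      hconv.mono_left inf_le_left
    have h2 : Filter.Tendsto (fun i => h • (g i • x))
        (l ⊓ Filter.principal {i | h • (g i • x) = g i • x}) (nhds (h • y)) :=
      ((hcont h).tendsto y).comp h1
    have h3 : Filter.Tendsto (fun i => h • (g i • x))
        (l ⊓ Filter.principal {i | h • (g i • x) = g i • x}) (nhds y) := by
      refine h1.congr' ?_
      exact Filter.eventually_inf_principal.2 (Filter.Eventually.of_forall fun i hi => hi.symm)
    have : h • y = y := tendsto_nhds_unique h2 h3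
    exact this
  refine ⟨key1, ?_⟩
  intro L hL
  have hmemL : ∀ h : G, (∀ᶠ i in l, h ∈ f i) → h ∈ L := by
    intro h hev
    have h2 : ∀ᶠ i in l, (h ∈ f i ↔ h ∈ L) := hL.eventually (chabauty_mem_nhds' L h)
    obtain ⟨i, hi1, hi2⟩ := (hev.and h2).exists
    exact hi2.1 hi1
  have hGyL : germStabilizer G y ≤ L := by
    intro h hh
    apply hmemL
    obtain ⟨U, hU, hUopen, hyU⟩ := eventually_nhds_iff.1 hh
    have hev : ∀ᶠ i in l, g i • x ∈ U := hconv (hUopen.mem_nhds hyU)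
    filter_upwards [hev] with i hi
    refine Subgroup.mem_map.2 ⟨(g i)⁻¹ * h * g i, ?_, ?_⟩
    · have hx : ∀ᶠ z in nhds x, g i • z ∈ U :=
        ((hcont (g i)).continuousAt (x := x)).preimage_mem_nhds (hUopen.mem_nhds hi)
      filter_upwards [hx] with z hz
      show ((g i)⁻¹ * h * g i) • z = z
      rw [mul_smul, mul_smul, hU _ hz, inv_smul_smul]
    · show MulAut.conj (g i) ((g i)⁻¹ * h * g i) = h
      rw [MulAut.conj_apply]
      group
  have hLstab : L ≤ MulAction.stabilizer G y := key1 L hL.mapClusterPt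
  exact ⟨hGyL, hLstab, le_antisymm hLstab (hy ▸ hGyL)⟩
end
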